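/- Let (V, Δ, c) be a vertex coalgebra (coefficient form), set D* := (Id ⊗ c) ∘ Δ_{−2} and D*^{(i)} := (D*)^i / i!. Then coefficient Co-Skew symmetry holds: for every r ∈ ℤ and every v ∈ V, Δ_{r+i}(D*^{(i)} v) = 0 for all but finitely many i ≥ 0, and T(Δᵣ v) = Σ_{i≥0} (−1)^{r+1+i} Δ_{r+i}(D*^{(i)} v). -/
import Mathlib


open TensorProduct

noncomputable section

/-- Generalized binomial coefficient `C(p,i) = p(p-1)⋯(p-i+1)/i!` as a complex number. -/
def cbin (p : ℤ) (i : ℕ) : ℂ :=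
  (∏ k ∈ Finset.range i, ((p : ℂ) - (k : ℂ))) / (i.factorial : ℂ)

variable {V : Type*} [AddCommGroup V] [Module ℂ V]

/-- The flip `T` on `V ⊗ V`, `T (u ⊗ w) = w ⊗ u`. -/
def Tflip : V ⊗[ℂ] V →ₗ[ℂ] V ⊗[ℂ] V := (TensorProduct.comm ℂ V V).toLinearMap

/-- `T ⊗ Id` acting on `V ⊗ (V ⊗ V)` (conjugated by the associator). -/
def TId : (V ⊗[ℂ] (V ⊗[ℂ] V)) →ₗ[ℂ] (V ⊗[ℂ] (V ⊗[ℂ] V)) :=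
  (TensorProduct.assoc ℂ V V V).toLinearMap ∘ₗ
    (TensorProduct.map Tflip LinearMap.id) ∘ₗ (TensorProduct.assoc ℂ V V V).symm.toLinearMap

/-- `(Δₙ ⊗ Id) ∘ Δₘ` as a map `V → V ⊗ (V ⊗ V)` (via the associator). -/
def DL (Δ : ℤ → V →ₗ[ℂ] V ⊗[ℂ] V) (n m : ℤ) : V →ₗ[ℂ] (V ⊗[ℂ] (V ⊗[ℂ] V)) :=
  (TensorProduct.assoc ℂ V V V).toLinearMap ∘ₗ (TensorProduct.map (Δ n) LinearMap.id) ∘ₗ Δ m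

/-- `(Id ⊗ Δₙ) ∘ Δₘ` as a map `V → V ⊗ (V ⊗ V)`. -/
def DR (Δ : ℤ → V →ₗ[ℂ] V ⊗[ℂ] V) (n m : ℤ) : V →ₗ[ℂ] (V ⊗[ℂ] (V ⊗[ℂ] V)) :=
  (TensorProduct.map LinearMap.id (Δ n)) ∘ₗ Δ m

/-- Truncation: for each `v` there is `N` with `Δₙ v = 0` for all `n ≤ N`. -/
def Truncation (Δ : ℤ → V →ₗ[ℂ] V ⊗[ℂ] V) : Prop :=
  ∀ v : V, ∃ N : ℤ, ∀ n ≤ N, Δ n v = 0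

/-- `(Id ⊗ c)` composed with the canonical identification `V ⊗ ℂ ≅ V`. -/
def IdC (c : V →ₗ[ℂ] ℂ) : (V ⊗[ℂ] V) →ₗ[ℂ] V :=
  (TensorProduct.rid ℂ V).toLinearMap ∘ₗ TensorProduct.map LinearMap.id c

/-- `(c ⊗ Id)` composed with the canonical identification `ℂ ⊗ V ≅ V`. -/
def CId (c : V →ₗ[ℂ] ℂ) : (V ⊗[ℂ] V) →ₗ[ℂ] V :=
  (TensorProduct.lid ℂ V).toLinearMap ∘ₗ TensorProduct.map c LinearMap.id

/-- Divided power `D*^{(i)} = (D*)^i / i!`. -/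
def dpow (D : V →ₗ[ℂ] V) (i : ℕ) : V →ₗ[ℂ] V := ((i.factorial : ℂ)⁻¹) • (D ^ i)

/-- The Co-Borcherds identity at `(p,q,r)`. -/
def CoBorcherds (Δ : ℤ → V →ₗ[ℂ] V ⊗[ℂ] V) (p q r : ℤ) : Prop :=
  ∀ v : V,
    (∑ᶠ i : ℕ, cbin p i • DL Δ (r + i) (p + q - i) v) =
      ∑ᶠ i : ℕ, ((-1 : ℂ) ^ i * cbin r i) •
        (DR Δ (q + i) (p + r - i) v - (-1 : ℂ) ^ r • TId (DR Δ (p + i) (q + r - i) v))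

/-- Left counit: `(c ⊗ Id) ∘ Δₙ` is the identity for `n = -1` and zero otherwise. -/
def LeftCounit (Δ : ℤ → V →ₗ[ℂ] V ⊗[ℂ] V) (c : V →ₗ[ℂ] ℂ) : Prop :=
  CId c ∘ₗ Δ (-1) = LinearMap.id ∧ ∀ n : ℤ, n ≠ -1 → CId c ∘ₗ Δ n = 0

/-- Cocreation: `(Id ⊗ c) ∘ Δₙ = 0` for `n ≥ 0` and `(Id ⊗ c) ∘ Δ₋₁ = Id`. -/
def Cocreation (Δ : ℤ → V →ₗ[ℂ] V ⊗[ℂ] V) (c : V →ₗ[ℂ] ℂ) : Prop :=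
  (∀ n : ℤ, 0 ≤ n → IdC c ∘ₗ Δ n = 0) ∧ IdC c ∘ₗ Δ (-1) = LinearMap.id

/-- Exponential cocreation: `(Id ⊗ c) ∘ Δ₋₁₋ᵢ = D*^{(i)}` for all `i ≥ 0`,
and `(Id ⊗ c) ∘ Δₙ = 0` for all `n ≥ 0`. -/
def ExpCocreation (Δ : ℤ → V →ₗ[ℂ] V ⊗[ℂ] V) (c : V →ₗ[ℂ] ℂ) (D : V →ₗ[ℂ] V) : Prop :=
  (∀ i : ℕ, IdC c ∘ₗ Δ (-1 - i) = dpow D i) ∧ ∀ n : ℤ, 0 ≤ n → IdC c ∘ₗ Δ n = 0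

/-- The `D*` formula: `(D* ⊗ Id) ∘ Δ_q = -q • Δ_{q-1}`. -/
def DstFormula (Δ : ℤ → V →ₗ[ℂ] V ⊗[ℂ] V) (D : V →ₗ[ℂ] V) : Prop :=
  ∀ q : ℤ, TensorProduct.map D LinearMap.id ∘ₗ Δ q = (-(q : ℂ)) • Δ (q - 1)

/-- Coefficient Co-Skew symmetry. -/
def CoSkew (Δ : ℤ → V →ₗ[ℂ] V ⊗[ℂ] V) (D : V →ₗ[ℂ] V) : Prop :=
  ∀ (r : ℤ) (v : V),
    {i : ℕ | Δ (r + i) (dpow D i v) ≠ 0}.Finite ∧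
    Tflip (Δ r v) = ∑ᶠ i : ℕ, (-1 : ℂ) ^ (r + 1 + (i : ℤ)) • Δ (r + i) (dpow D i v)

/-- Coefficient Co-Commutator formula at `(p,q)`. -/
def CoCommutator (Δ : ℤ → V →ₗ[ℂ] V ⊗[ℂ] V) (p q : ℤ) : Prop :=
  ∀ v : V,
    (∑ᶠ i : ℕ, cbin p i • DL Δ (i : ℤ) (p + q - i) v) = DR Δ q p v - TId (DR Δ p q v)

/-- Coefficient Co-Associator formula at `(q,r)`. -/
def CoAssociator (Δ : ℤ → V →ₗ[ℂ] V ⊗[ℂ] V) (q r : ℤ) : Prop :=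
  ∀ v : V,
    DL Δ r q v =
      ∑ᶠ i : ℕ, ((-1 : ℂ) ^ i * cbin r i) •
        (DR Δ (q + i) (r - i) v - (-1 : ℂ) ^ r • TId (DR Δ (i : ℤ) (q + r - i) v))


section Aux

variable {V : Type*} [AddCommGroup V] [Module ℂ V]

lemma cbin_zero (p : ℤ) : cbin p 0 = 1 := by simp [cbin]

lemma cbin_one (p : ℤ) : cbin p 1 = p := by simp [cbin]

lemma cbin_neg_one (i : ℕ) : cbin (-1) i = (-1 : ℂ) ^ i := by
  have h : ∏ k ∈ Finset.range i, (((-1 : ℤ) : ℂ) - (k : ℂ)) =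
      (-1 : ℂ) ^ i * (i.factorial : ℂ) := by
    induction i with
    | zero => simp
    | succ j ih =>
      rw [Finset.prod_range_succ, ih, Nat.factorial_succ]
      push_cast
      ring
  rw [cbin, h, mul_div_assoc, div_self (by exact_mod_cast i.factorial_ne_zero), mul_one]

lemma DL_zero {Δ : ℤ → V →ₗ[ℂ] V ⊗[ℂ] V} {n m : ℤ} {v : V} (h : Δ m v = 0) :
    DL Δ n m v = 0 := by simp [DL, h]

lemma DR_zero {Δ : ℤ → V →ₗ[ℂ] V ⊗[ℂ] V} {n m : ℤ} {v : V} (h : Δ m v = 0) :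
    DR Δ n m v = 0 := by simp [DR, h]

lemma IdC_tmul (c : V →ₗ[ℂ] ℂ) (u w : V) : IdC c (u ⊗ₜ[ℂ] w) = c w • u := by simp [IdC]

lemma CId_tmul (c : V →ₗ[ℂ] ℂ) (u w : V) : CId c (u ⊗ₜ[ℂ] w) = c u • w := by simp [CId]

/-- Apply `c` to the last slot of `V ⊗ (V ⊗ V)`. -/
def PhiC (c : V →ₗ[ℂ] ℂ) : (V ⊗[ℂ] (V ⊗[ℂ] V)) →ₗ[ℂ] V ⊗[ℂ] V :=
  TensorProduct.map LinearMap.id (IdC c)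

/-- Apply `c` to the middle slot of `V ⊗ (V ⊗ V)`. -/
def PsiC (c : V →ₗ[ℂ] ℂ) : (V ⊗[ℂ] (V ⊗[ℂ] V)) →ₗ[ℂ] V ⊗[ℂ] V :=
  TensorProduct.map LinearMap.id (CId c)

lemma PhiC_assoc (c : V →ₗ[ℂ] ℂ) (y : V ⊗[ℂ] V) (w : V) :
    PhiC c ((TensorProduct.assoc ℂ V V V) (y ⊗ₜ[ℂ] w)) = c w • y := by
  induction y using TensorProduct.induction_on with
  | zero => simp
  | tmul a b =>
    simp [PhiC, IdC_tmul, TensorProduct.tmul_smul]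
  | add x y hx hy =>
    simp only [TensorProduct.add_tmul, map_add, hx, hy, smul_add]

lemma PsiC_assoc (c : V →ₗ[ℂ] ℂ) (y : V ⊗[ℂ] V) (w : V) :
    PsiC c ((TensorProduct.assoc ℂ V V V) (y ⊗ₜ[ℂ] w)) = (IdC c y) ⊗ₜ[ℂ] w := by
  induction y using TensorProduct.induction_on with
  | zero => simp
  | tmul a b =>
    simp [PsiC, CId_tmul, IdC_tmul, TensorProduct.tmul_smul, TensorProduct.smul_tmul']
  | add x y hx hy =>
    simp only [TensorProduct.add_tmul, map_add, hx, hy]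

lemma phi_DL (c : V →ₗ[ℂ] ℂ) (Δ : ℤ → V →ₗ[ℂ] V ⊗[ℂ] V) (n m : ℤ) (v : V) :
    PhiC c (DL Δ n m v) = Δ n (IdC c (Δ m v)) := by
  have h : ∀ x : V ⊗[ℂ] V,
      PhiC c ((TensorProduct.assoc ℂ V V V) (TensorProduct.map (Δ n) LinearMap.id x)) =
        Δ n (IdC c x) := by
    intro x
    induction x using TensorProduct.induction_on with
    | zero => simp
    | tmul u w =>
      rw [TensorProduct.map_tmul]
      simp only [LinearMap.id_coe, id_eq]
      rw [PhiC_assoc, IdC_tmul, map_smul]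
    | add x y hx hy => simp only [map_add, hx, hy]
  simpa [DL] using h (Δ m v)

lemma psi_DL (c : V →ₗ[ℂ] ℂ) (Δ : ℤ → V →ₗ[ℂ] V ⊗[ℂ] V) (n m : ℤ) (v : V) :
    PsiC c (DL Δ n m v) =
      TensorProduct.map (IdC c ∘ₗ Δ n) LinearMap.id (Δ m v) := by
  have h : ∀ x : V ⊗[ℂ] V,
      PsiC c ((TensorProduct.assoc ℂ V V V) (TensorProduct.map (Δ n) LinearMap.id x)) =
        TensorProduct.map (IdC c ∘ₗ Δ n) LinearMap.id x := by
    intro x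
    induction x using TensorProduct.induction_on with
    | zero => simp
    | tmul u w =>
      rw [TensorProduct.map_tmul, TensorProduct.map_tmul]
      simp only [LinearMap.id_coe, id_eq, LinearMap.comp_apply]
      rw [PsiC_assoc]
    | add x y hx hy => simp only [map_add, hx, hy]
  simpa [DL] using h (Δ m v)

lemma phi_DR (c : V →ₗ[ℂ] ℂ) (Δ : ℤ → V →ₗ[ℂ] V ⊗[ℂ] V) (n m : ℤ) (v : V) :
    PhiC c (DR Δ n m v) =
      TensorProduct.map LinearMap.id (IdC c ∘ₗ Δ n) (Δ m v) := by
  have h : ∀ x : V ⊗[ℂ] V,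
      PhiC c (TensorProduct.map LinearMap.id (Δ n) x) =
        TensorProduct.map LinearMap.id (IdC c ∘ₗ Δ n) x := by
    intro x
    induction x using TensorProduct.induction_on with
    | zero => simp
    | tmul u w => simp [PhiC]
    | add x y hx hy => simp only [map_add, hx, hy]
  simpa [DR] using h (Δ m v)

lemma psi_DR (c : V →ₗ[ℂ] ℂ) (Δ : ℤ → V →ₗ[ℂ] V ⊗[ℂ] V) (n m : ℤ) (v : V) :
    PsiC c (DR Δ n m v) =
      TensorProduct.map LinearMap.id (CId c ∘ₗ Δ n) (Δ m v) := by
  have h : ∀ x : V ⊗[ℂ] V,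
      PsiC c (TensorProduct.map LinearMap.id (Δ n) x) =
        TensorProduct.map LinearMap.id (CId c ∘ₗ Δ n) x := by
    intro x
    induction x using TensorProduct.induction_on with
    | zero => simp
    | tmul u w => simp [PsiC]
    | add x y hx hy => simp only [map_add, hx, hy]
  simpa [DR] using h (Δ m v)

lemma phi_TId_aux (c : V →ₗ[ℂ] ℂ) (u : V) (y : V ⊗[ℂ] V) :
    PhiC c (TId (u ⊗ₜ[ℂ] y)) = Tflip (u ⊗ₜ[ℂ] IdC c y) := by
  induction y using TensorProduct.induction_on with
  | zero => simp [TId]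
  | tmul a b =>
    simp [TId, Tflip, PhiC, IdC_tmul, TensorProduct.tmul_smul, TensorProduct.smul_tmul']
  | add x y hx hy =>
    simp only [TensorProduct.tmul_add, map_add, hx, hy]

lemma psi_TId_aux (c : V →ₗ[ℂ] ℂ) (u : V) (y : V ⊗[ℂ] V) :
    PsiC c (TId (u ⊗ₜ[ℂ] y)) = c u • y := by
  induction y using TensorProduct.induction_on with
  | zero => simp [TId]
  | tmul a b =>
    simp [TId, Tflip, PsiC, CId_tmul, TensorProduct.tmul_smul]
  | add x y hx hy =>
    simp only [TensorProduct.tmul_add, map_add, hx, hy, smul_add]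

lemma phi_TId_DR (c : V →ₗ[ℂ] ℂ) (Δ : ℤ → V →ₗ[ℂ] V ⊗[ℂ] V) (n m : ℤ) (v : V) :
    PhiC c (TId (DR Δ n m v)) =
      Tflip (TensorProduct.map LinearMap.id (IdC c ∘ₗ Δ n) (Δ m v)) := by
  have h : ∀ x : V ⊗[ℂ] V,
      PhiC c (TId (TensorProduct.map LinearMap.id (Δ n) x)) =
        Tflip (TensorProduct.map LinearMap.id (IdC c ∘ₗ Δ n) x) := by
    intro x
    induction x using TensorProduct.induction_on with
    | zero => simp [TId]
    | tmul u w =>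
      rw [TensorProduct.map_tmul, TensorProduct.map_tmul]
      simp only [LinearMap.id_coe, id_eq, LinearMap.comp_apply]
      rw [phi_TId_aux]
    | add x y hx hy => simp only [map_add, hx, hy]
  simpa [DR] using h (Δ m v)

lemma psi_TId_DR (c : V →ₗ[ℂ] ℂ) (Δ : ℤ → V →ₗ[ℂ] V ⊗[ℂ] V) (n m : ℤ) (v : V) :
    PsiC c (TId (DR Δ n m v)) = Δ n (CId c (Δ m v)) := by
  have h : ∀ x : V ⊗[ℂ] V,
      PsiC c (TId (TensorProduct.map LinearMap.id (Δ n) x)) = Δ n (CId c x) := by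
    intro x
    induction x using TensorProduct.induction_on with
    | zero => simp [TId]
    | tmul u w =>
      rw [TensorProduct.map_tmul]
      simp only [LinearMap.id_coe, id_eq]
      rw [psi_TId_aux, CId_tmul, map_smul]
    | add x y hx hy => simp only [map_add, hx, hy]
  simpa [DR] using h (Δ m v)

lemma IdC_map (c : V →ₗ[ℂ] ℂ) (D : V →ₗ[ℂ] V) (x : V ⊗[ℂ] V) :
    IdC c (TensorProduct.map D LinearMap.id x) = D (IdC c x) := by
  induction x using TensorProduct.induction_on with
  | zero => simp
  | tmul u w => simp [IdC_tmul, map_smul]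
  | add x y hx hy => simp only [map_add, hx, hy]

lemma supp_DL_fin (Δ : ℤ → V →ₗ[ℂ] V ⊗[ℂ] V) (htr : Truncation Δ) (v : V)
    (coef : ℕ → ℂ) (n m : ℕ → ℤ) (a : ℤ) (hm : ∀ i, m i = a - i) :
    (Function.support fun i : ℕ => coef i • DL Δ (n i) (m i) v).Finite := by
  obtain ⟨N, hN⟩ := htr v
  apply Set.Finite.subset (Set.finite_Iio (a - N).toNat)
  intro i hi
  rw [Function.mem_support] at hi
  rw [Set.mem_Iio]
  by_contra hge
  push_neg at hge
  exact hi (by rw [DL_zero (hN (m i) (by rw [hm]; omega)), smul_zero])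

lemma supp_rhs_fin (Δ : ℤ → V →ₗ[ℂ] V ⊗[ℂ] V) (htr : Truncation Δ) (v : V)
    (coef : ℕ → ℂ) (e : ℂ) (n1 n2 m1 m2 : ℕ → ℤ) (a b : ℤ)
    (h1 : ∀ i, m1 i = a - i) (h2 : ∀ i, m2 i = b - i) :
    (Function.support fun i : ℕ =>
      coef i • (DR Δ (n1 i) (m1 i) v - e • TId (DR Δ (n2 i) (m2 i) v))).Finite := by
  obtain ⟨N, hN⟩ := htr v
  apply Set.Finite.subset (Set.finite_Iio (max a b - N).toNat)
  intro i hi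
  rw [Function.mem_support] at hi
  rw [Set.mem_Iio]
  by_contra hge
  push_neg at hge
  refine hi ?_
  rw [DR_zero (hN (m1 i) (by rw [h1]; omega)), DR_zero (hN (m2 i) (by rw [h2]; omega))]
  simp

lemma dpow_zero' (D : V →ₗ[ℂ] V) : dpow D 0 = LinearMap.id := by
  simp [dpow, Module.End.one_eq_id]

end Aux

lemma lmap_finsum {M N : Type*} [AddCommMonoid M] [AddCommMonoid N] [Module ℂ M] [Module ℂ N]
    (φ : M →ₗ[ℂ] N) {f : ℕ → M} (hf : (Function.support f).Finite) :
    φ (∑ᶠ i, f i) = ∑ᶠ i, φ (f i) :=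
  φ.toAddMonoidHom.map_finsum hf

theorem coSkew_of_vertexCoalgebra (Δ : ℤ → V →ₗ[ℂ] V ⊗[ℂ] V) (c : V →ₗ[ℂ] ℂ)
    (hcu : LeftCounit Δ c) (hcc : Cocreation Δ c) (htr : Truncation Δ)
    (hB : ∀ p q r : ℤ, CoBorcherds Δ p q r) :
    CoSkew Δ (IdC c ∘ₗ Δ (-2)) := by
  -- Step 1: the D* formula
  have dst : ∀ (q : ℤ) (w : V),
      TensorProduct.map (IdC c ∘ₗ Δ (-2)) LinearMap.id (Δ q w) = (-(q : ℂ)) • Δ (q - 1) w := by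
    intro q w
    have key := hB (q + 1) (-1) (-2) w
    simp only [show q + 1 + (-1 : ℤ) = q from by ring, show q + 1 + (-2 : ℤ) = q - 1 from by ring,
      show (-1 : ℤ) + -2 = -3 from by ring] at key
    have hfL : (Function.support fun i : ℕ =>
        cbin (q + 1) i • DL Δ (-2 + i) (q - i) w).Finite :=
      supp_DL_fin Δ htr w (fun i => cbin (q + 1) i) (fun i => -2 + i) (fun i => q - i) q
        (fun i => rfl)
    have hfR : (Function.support fun i : ℕ =>
        ((-1 : ℂ) ^ i * cbin (-2) i) • (DR Δ (-1 + i) (q - 1 - i) w -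
          ((-1 : ℂ) ^ (-2 : ℤ)) • TId (DR Δ (q + 1 + i) (-3 - i) w))).Finite :=
      supp_rhs_fin Δ htr w (fun i => (-1 : ℂ) ^ i * cbin (-2) i) ((-1 : ℂ) ^ (-2 : ℤ))
        (fun i => -1 + i) (fun i => q + 1 + i) (fun i => q - 1 - i) (fun i => -3 - i)
        (q - 1) (-3) (fun i => rfl) (fun i => rfl)
    have hkey : (∑ᶠ i : ℕ, PsiC c (cbin (q + 1) i • DL Δ (-2 + i) (q - i) w)) =
        ∑ᶠ i : ℕ, PsiC c (((-1 : ℂ) ^ i * cbin (-2) i) • (DR Δ (-1 + i) (q - 1 - i) w -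
          ((-1 : ℂ) ^ (-2 : ℤ)) • TId (DR Δ (q + 1 + i) (-3 - i) w))) := by
      rw [← lmap_finsum (PsiC c) hfL, ← lmap_finsum (PsiC c) hfR, key]
    have hL : (∑ᶠ i : ℕ, PsiC c (cbin (q + 1) i • DL Δ (-2 + i) (q - i) w)) =
        TensorProduct.map (IdC c ∘ₗ Δ (-2)) LinearMap.id (Δ q w) +
          ((q : ℂ) + 1) • Δ (q - 1) w := by
      have hterm : ∀ i : ℕ, PsiC c (cbin (q + 1) i • DL Δ (-2 + i) (q - i) w) =
          cbin (q + 1) i • TensorProduct.map (IdC c ∘ₗ Δ (-2 + i)) LinearMap.id (Δ (q - i) w) := by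
        intro i; rw [map_smul, psi_DL]
      rw [finsum_congr hterm]
      have hsub : (Function.support fun i : ℕ => cbin (q + 1) i •
          TensorProduct.map (IdC c ∘ₗ Δ (-2 + (i : ℤ))) LinearMap.id (Δ (q - i) w)) ⊆
          (({0, 1} : Finset ℕ) : Set ℕ) := by
        intro i hi
        rw [Function.mem_support] at hi
        by_contra hmem
        have hi2 : 2 ≤ i := by
          simp only [Finset.coe_insert, Finset.coe_singleton, Set.mem_insert_iff,
            Set.mem_singleton_iff] at hmem
          omega
        refine hi ?_
        rw [hcc.1 (-2 + i) (by omega), TensorProduct.map_zero_left]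
        simp
      rw [finsum_eq_finset_sum_of_support_subset _ hsub,
        Finset.sum_pair (by norm_num : (0 : ℕ) ≠ 1)]
      rw [show (-2 + ((0 : ℕ) : ℤ)) = -2 from by norm_num,
        show (-2 + ((1 : ℕ) : ℤ)) = -1 from by norm_num,
        show (q - ((0 : ℕ) : ℤ)) = q from by norm_num,
        show (q - ((1 : ℕ) : ℤ)) = q - 1 from by norm_num,
        cbin_zero, cbin_one, one_smul, hcc.2, TensorProduct.map_id]
      push_cast
      simp
    have hR : (∑ᶠ i : ℕ, PsiC c (((-1 : ℂ) ^ i * cbin (-2) i) •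
        (DR Δ (-1 + i) (q - 1 - i) w -
          ((-1 : ℂ) ^ (-2 : ℤ)) • TId (DR Δ (q + 1 + i) (-3 - i) w)))) = Δ (q - 1) w := by
      have hzero : ∀ i : ℕ, i ≠ 0 → PsiC c (((-1 : ℂ) ^ i * cbin (-2) i) •
          (DR Δ (-1 + i) (q - 1 - i) w -
            ((-1 : ℂ) ^ (-2 : ℤ)) • TId (DR Δ (q + 1 + i) (-3 - i) w))) = 0 := by
        intro i hi0
        rw [map_smul, map_sub, map_smul, psi_DR, psi_TId_DR]
        have hz2 : CId c (Δ (-3 - (i : ℤ)) w) = 0 := by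
          have := LinearMap.congr_fun (hcu.2 (-3 - (i : ℤ)) (by omega)) w
          simpa using this
        rw [hcu.2 (-1 + i) (by omega), TensorProduct.map_zero_right, hz2]
        simp
      rw [finsum_eq_single _ 0 hzero]
      rw [map_smul, map_sub, map_smul, psi_DR, psi_TId_DR]
      have hz2 : CId c (Δ (-3 - ((0 : ℕ) : ℤ)) w) = 0 := by
        have := LinearMap.congr_fun (hcu.2 (-3 - ((0 : ℕ) : ℤ)) (by norm_num)) w
        simpa using this
      rw [hz2, map_zero, smul_zero, sub_zero,
        show (-1 + ((0 : ℕ) : ℤ)) = -1 from by norm_num, hcu.1, TensorProduct.map_id,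
        show (q - 1 - ((0 : ℕ) : ℤ)) = q - 1 from by norm_num]
      simp [cbin_zero]
    have hfinal : TensorProduct.map (IdC c ∘ₗ Δ (-2)) LinearMap.id (Δ q w) +
        ((q : ℂ) + 1) • Δ (q - 1) w = Δ (q - 1) w := by
      rw [← hL, hkey, hR]
    rw [eq_sub_of_add_eq hfinal]
    module
  -- Step 2: exponential cocreation
  have hE : ∀ i : ℕ, IdC c ∘ₗ Δ (-1 - (i : ℤ)) = dpow (IdC c ∘ₗ Δ (-2)) i := by
    intro i
    induction i with
    | zero => rw [show (-1 - ((0 : ℕ) : ℤ)) = -1 from by norm_num, hcc.2, dpow_zero']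
    | succ j ih =>
      ext w
      have hji : IdC c (Δ (-1 - (j : ℤ) - 1) w) =
          ((j : ℂ) + 1)⁻¹ • ((IdC c ∘ₗ Δ (-2)) (dpow (IdC c ∘ₗ Δ (-2)) j w)) := by
        have h2 := congrArg (IdC c) (dst (-1 - (j : ℤ)) w)
        rw [IdC_map, map_smul] at h2
        have h3 : IdC c (Δ (-1 - (j : ℤ)) w) = dpow (IdC c ∘ₗ Δ (-2)) j w := by
          have := LinearMap.congr_fun ih w
          simpa using this
        rw [h3, show (-((((-1 - (j : ℤ)) : ℤ)) : ℂ)) = (j : ℂ) + 1 from by push_cast; ring] at h2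
        rw [h2, smul_smul, inv_mul_cancel₀ (by exact_mod_cast Nat.succ_ne_zero j),
          one_smul]
      rw [LinearMap.comp_apply, show (-1 - ((j + 1 : ℕ) : ℤ)) = -1 - (j : ℤ) - 1 from by
        push_cast; ring, hji]
      have hpow : ((IdC c ∘ₗ Δ (-2)) ^ (j + 1)) w =
          (IdC c ∘ₗ Δ (-2)) (((IdC c ∘ₗ Δ (-2)) ^ j) w) := by
        rw [pow_succ']
        rfl
      simp only [dpow, LinearMap.smul_apply, map_smul, hpow, smul_smul, Nat.factorial_succ]
      congr 1
      push_cast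
      rw [mul_inv]
  -- Step 3: the main identity
  intro r v
  have hdz : ∀ i : ℕ, Δ (-1 - (i : ℤ)) v = 0 →
      Δ (r + i) (dpow (IdC c ∘ₗ Δ (-2)) i v) = 0 := by
    intro i h
    have hz : dpow (IdC c ∘ₗ Δ (-2)) i v = 0 := by
      rw [← hE i]
      simp [h]
    rw [hz, map_zero]
  obtain ⟨N, hN⟩ := htr v
  have hfin : {i : ℕ | Δ (r + i) (dpow (IdC c ∘ₗ Δ (-2)) i v) ≠ 0}.Finite := by
    apply Set.Finite.subset (Set.finite_Iio (-1 - N).toNat)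
    intro i hi
    rw [Set.mem_setOf_eq] at hi
    rw [Set.mem_Iio]
    by_contra hge
    push_neg at hge
    exact hi (hdz i (hN _ (by omega)))
  refine ⟨hfin, ?_⟩
  have key := hB (-1) 0 r v
  simp only [show (-1 : ℤ) + 0 = -1 from by ring, show (-1 : ℤ) + r = r - 1 from by ring,
    zero_add] at key
  have hfL := supp_DL_fin Δ htr v (fun i => cbin (-1) i) (fun i => r + i) (fun i => -1 - i)
    (-1) (fun i => rfl)
  have hfR := supp_rhs_fin Δ htr v (fun i => (-1 : ℂ) ^ i * cbin r i) ((-1 : ℂ) ^ r)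
    (fun i => (i : ℤ)) (fun i => -1 + i) (fun i => r - 1 - i) (fun i => r - i)
    (r - 1) r (fun i => rfl) (fun i => rfl)
  have hkey : (∑ᶠ i : ℕ, PhiC c (cbin (-1) i • DL Δ (r + i) (-1 - i) v)) =
      ∑ᶠ i : ℕ, PhiC c (((-1 : ℂ) ^ i * cbin r i) • (DR Δ (i : ℤ) (r - 1 - i) v -
        ((-1 : ℂ) ^ r) • TId (DR Δ (-1 + i) (r - i) v))) := by
    rw [← lmap_finsum (PhiC c) hfL, ← lmap_finsum (PhiC c) hfR, key]
  have hL : (∑ᶠ i : ℕ, PhiC c (cbin (-1) i • DL Δ (r + i) (-1 - i) v)) =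
      ∑ᶠ i : ℕ, (-1 : ℂ) ^ i • Δ (r + i) (dpow (IdC c ∘ₗ Δ (-2)) i v) := by
    apply finsum_congr
    intro i
    rw [map_smul, phi_DL, cbin_neg_one]
    have h3 : IdC c (Δ (-1 - (i : ℤ)) v) = dpow (IdC c ∘ₗ Δ (-2)) i v := by
      have := LinearMap.congr_fun (hE i) v
      simpa using this
    rw [h3]
  have hR : (∑ᶠ i : ℕ, PhiC c (((-1 : ℂ) ^ i * cbin r i) • (DR Δ (i : ℤ) (r - 1 - i) v -
      ((-1 : ℂ) ^ r) • TId (DR Δ (-1 + i) (r - i) v)))) =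
      -((-1 : ℂ) ^ r • Tflip (Δ r v)) := by
    have hzero : ∀ i : ℕ, i ≠ 0 → PhiC c (((-1 : ℂ) ^ i * cbin r i) •
        (DR Δ (i : ℤ) (r - 1 - i) v - ((-1 : ℂ) ^ r) • TId (DR Δ (-1 + i) (r - i) v))) = 0 := by
      intro i hi0
      rw [map_smul, map_sub, map_smul, phi_DR, phi_TId_DR]
      rw [hcc.1 (i : ℤ) (by omega), TensorProduct.map_zero_right,
        hcc.1 (-1 + i) (by omega), TensorProduct.map_zero_right]
      simp
    rw [finsum_eq_single _ 0 hzero]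
    rw [map_smul, map_sub, map_smul, phi_DR, phi_TId_DR]
    rw [hcc.1 ((0 : ℕ) : ℤ) (by norm_num), TensorProduct.map_zero_right,
      show (-1 + ((0 : ℕ) : ℤ)) = -1 from by norm_num, hcc.2, TensorProduct.map_id,
      show (r - ((0 : ℕ) : ℤ)) = r from by norm_num]
    simp [cbin_zero]
  have hmain : (∑ᶠ i : ℕ, (-1 : ℂ) ^ i • Δ (r + i) (dpow (IdC c ∘ₗ Δ (-2)) i v)) =
      -((-1 : ℂ) ^ r • Tflip (Δ r v)) := by
    rw [← hL, hkey, hR]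
  have hsupp : (Function.support fun i : ℕ =>
      (-1 : ℂ) ^ i • Δ (r + i) (dpow (IdC c ∘ₗ Δ (-2)) i v)).Finite := by
    apply hfin.subset
    intro i hi
    rw [Function.mem_support] at hi
    rw [Set.mem_setOf_eq]
    intro h0
    exact hi (by rw [h0, smul_zero])
  have hterm : ∀ i : ℕ, (-1 : ℂ) ^ (r + 1 + (i : ℤ)) • Δ (r + i) (dpow (IdC c ∘ₗ Δ (-2)) i v) =
      (-(-1 : ℂ) ^ r) • ((-1 : ℂ) ^ i • Δ (r + i) (dpow (IdC c ∘ₗ Δ (-2)) i v)) := by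
    intro i
    rw [smul_smul]
    congr 1
    rw [zpow_add₀ (by norm_num : (-1 : ℂ) ≠ 0), zpow_add₀ (by norm_num : (-1 : ℂ) ≠ 0),
      zpow_natCast, zpow_one]
    ring
  have hone : ((-1 : ℂ) ^ r) * ((-1 : ℂ) ^ r) = 1 := by
    rw [← zpow_add₀ (by norm_num : (-1 : ℂ) ≠ 0), ← two_mul, zpow_mul]
    norm_num
  rw [finsum_congr hterm, ← smul_finsum' (-(-1 : ℂ) ^ r) hsupp, hmain, smul_neg, smul_smul,
    neg_mul, neg_smul, neg_neg, hone, one_smul]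

end
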